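/- Let p ≥ 2 be a prime number and let Z_p be the cyclic group of order p. The characteristic polynomial of the adjacency matrix of the strong power graph P_s(Z_p) equals x · (x+1)^{p-2} · (x + 2 - p). -/

import Mathlib

/-!
For `p` prime every nonzero element of `ZMod p` is a multiple of every other one by a unit, so
`0` is an isolated vertex of the strong power graph and the nonzero elements form a clique
`K_{p-1}`. Deleting the zero row and column splits off a factor `X`, and the adjacency matrix of
`K_m` is `J - I` with `J = 1 1ᵀ` of rank one, whose characteristic polynomial is
`X ^ m - m X ^ (m - 1)`; shifting by `1` gives `(X + 1) ^ (m - 1) * (X + 1 - m)`.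
-/

/-- The strong power graph of the cyclic group `ZMod n` (written additively):
two distinct vertices `x` and `y` are adjacent iff `a • x = b • y` for some
positive integers `a, b < n`. -/
def strongPowerGraphZ (n : ℕ) : SimpleGraph (ZMod n) where
  Adj x y := x ≠ y ∧ ∃ a b : ℕ, 0 < a ∧ a < n ∧ 0 < b ∧ b < n ∧ a • x = b • y
  symm := by
    refine ⟨?_⟩
    rintro x y ⟨h, a, b, ha, ha', hb, hb', hab⟩
    exact ⟨h.symm, b, a, hb, hb', ha, ha', hab.symm⟩
  loopless := by
    refine ⟨?_⟩
    rintro x ⟨h, -⟩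
    exact h rfl

/-- The distance matrix (with real entries) of the strong power graph of `ZMod n`. -/
noncomputable def distMatrixZ (n : ℕ) [NeZero n] : Matrix (ZMod n) (ZMod n) ℝ :=
  Matrix.of fun i j => ((strongPowerGraphZ n).dist i j : ℝ)

open Classical in
/-- The adjacency matrix (with real entries) of the strong power graph of `ZMod n`. -/
noncomputable def adjMatrixZ (n : ℕ) [NeZero n] : Matrix (ZMod n) (ZMod n) ℝ :=
  Matrix.of fun i j => if (strongPowerGraphZ n).Adj i j then 1 else 0

open Polynomial

lemma strongPowerGraphZ_adj_iff_of_prime {p : ℕ} (hp : p.Prime) {x y : ZMod p} :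
    (strongPowerGraphZ p).Adj x y ↔ x ≠ y ∧ x ≠ 0 ∧ y ≠ 0 := by
  have : Fact p.Prime := ⟨hp⟩
  have cast_ne_zero : ∀ {a : ℕ}, 0 < a → a < p → (a : ZMod p) ≠ 0 := fun ha hap h =>
    (Nat.le_of_dvd ha ((ZMod.natCast_eq_zero_iff _ _).1 h)).not_gt hap
  constructor
  · rintro ⟨hxy, a, b, ha, hap, hb, hbp, hab⟩
    rw [nsmul_eq_mul, nsmul_eq_mul] at hab
    refine ⟨hxy, ?_, ?_⟩
    · rintro rfl
      simp_all [cast_ne_zero hb hbp, eq_comm]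
    · rintro rfl
      simp_all [cast_ne_zero ha hap]
  · rintro ⟨hxy, hx, hy⟩
    refine ⟨hxy, (y / x).val, 1, ?_, ZMod.val_lt _, one_pos, hp.one_lt, ?_⟩
    · exact Nat.pos_of_ne_zero <| (ZMod.val_ne_zero _).2 (div_ne_zero hy hx)
    · simp [nsmul_eq_mul, div_mul_cancel₀ y hx]

section Charpoly

open Matrix

variable {R n : Type*} [CommRing R] [Fintype n] [DecidableEq n]

theorem Matrix.charpoly_eq_X_mul_charpoly_submatrix_of_row_eq_zero (M : Matrix n n R) (v : n)
    (hv : ∀ j, M v j = 0) :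
    M.charpoly = X * (M.submatrix ((↑) : ({v}ᶜ : Set n) → n) (↑)).charpoly := by
  let e := (Equiv.Set.sumCompl {v}).symm
  have hblocks : reindex e e M = fromBlocks 0 0 (reindex e e M).toBlocks₂₁
      (M.submatrix ((↑) : ({v}ᶜ : Set n) → n) (↑)) := by
    rw [← fromBlocks_toBlocks (reindex e e M)]
    congr 1 <;> ext ⟨i, rfl⟩ j <;> simp [e, toBlocks₁₁, toBlocks₁₂, hv]
  rw [← charpoly_reindex e, hblocks, charpoly_fromBlocks_zero₁₂, charpoly_zero]
  simp

theorem SimpleGraph.charpoly_adjMatrix_completeGraph [Nonempty n] :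
    ((completeGraph n).adjMatrix R).charpoly =
      (X + 1) ^ (Fintype.card n - 1) * (X + C (1 - (Fintype.card n : R))) := by
  obtain ⟨k, hk⟩ : ∃ k, Fintype.card n = k + 1 :=
    Nat.exists_eq_succ_of_ne_zero Fintype.card_ne_zero
  have hJ : (completeGraph n).adjMatrix R = vecMulVec 1 1 - scalar n 1 := by
    ext i j
    by_cases hij : i = j <;> simp [hij]
  rw [hJ, charpoly_sub_scalar, charpoly_vecMulVec, smul_eq_C_mul]
  simp [hk]
  ring

end Charpoly

/-- For a prime `p`, the characteristic polynomial of the adjacency matrix of the strong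
power graph of `ZMod p` is `x * (x+1)^(p-2) * (x + 2 - p)`. -/
theorem adjMatrixZ_charpoly_prime (p : ℕ) [NeZero p] (hp : p.Prime) :
    (adjMatrixZ p).charpoly = X * (X + 1) ^ (p - 2) * (X + C ((2 : ℝ) - (p : ℝ))) := by
  have : Fact p.Prime := ⟨hp⟩
  have hsub : (adjMatrixZ p).submatrix (Subtype.val : ({0}ᶜ : Set (ZMod p)) → ZMod p) Subtype.val =
      (SimpleGraph.completeGraph _).adjMatrix ℝ := by
    ext ⟨i, hi : i ≠ 0⟩ ⟨j, hj : j ≠ 0⟩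
    by_cases hij : i = j <;>
      simp [adjMatrixZ, strongPowerGraphZ_adj_iff_of_prime hp, hi, hj, hij, Subtype.ext_iff]
  have hcard : Fintype.card ({0}ᶜ : Set (ZMod p)) = p - 1 := by
    rw [Fintype.card_compl_set, ZMod.card, Fintype.card_unique]
  have : Nonempty ({0}ᶜ : Set (ZMod p)) := ⟨⟨1, one_ne_zero⟩⟩
  rw [(adjMatrixZ p).charpoly_eq_X_mul_charpoly_submatrix_of_row_eq_zero 0
      (fun j => by simp [adjMatrixZ, strongPowerGraphZ_adj_iff_of_prime hp]),
    hsub, SimpleGraph.charpoly_adjMatrix_completeGraph, hcard, mul_assoc, show p - 1 - 1 = p - 2 by omega, Nat.cast_sub hp.one_le]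
  ring_nf
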